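/- Consider the two-stage explicit Runge–Kutta method with Butcher tableau a₂₁ = 2/3, c = (0, 2/3), b = (1/4, 3/4). For every Hamiltonian system ẏ = J∇H(y) with J constant skew-symmetric and H smooth, and every initial value y₀, the one-step approximation y₁(h) satisfies H(y₁(h)) = H(y₀) + O(h⁴) as h → 0. Moreover, this method does not satisfy the classical third-order condition ∑_{i,j} b_i a_{ij} c_j = 1/6 (indeed ∑_{i,j} b_i a_{ij} c_j = 0), so its classical order is exactly 2 while its pseudo-energy-preserving order is at least 3. -/

import Mathlib

/-!
With `Φ L = J ∇L`, the vector field is `f = Φ ∘ dH` and skew-symmetry of `J` reads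
`L (Φ M) = -M (Φ L)`; in particular `L (Φ L) = 0`. The Ralston step is `y₀ + h w(h)` with
`w(h) = ¼ f(y₀) + ¾ f(y₀ + ⅔ h f(y₀))`. Writing `v = f(y₀)`, the first three derivatives of
`h ↦ H(y₀ + h w(h))` at `0` are `dH v`, `d²H(v,v) + dH(Φ(d²H v))` and
`d³H(v,v,v) + 3 d²H(v, Φ(d²H v)) + dH(Φ(d³H(v,v)))`: the weights `b₂a₂₁ = ½` and `b₂a₂₁² = ⅓` are
exactly those making each of them vanish by skew-symmetry. The composite is smooth, so the energy
error is `O(h⁴)`.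
-/

open Filter Asymptotics Topology Matrix

/-- The gradient of `H : ℝⁿ → ℝ` in coordinates: `(∇H(y))_i = ∂H/∂y_i (y)`. -/
noncomputable def grad {n : ℕ} (H : (Fin n → ℝ) → ℝ) (y : Fin n → ℝ) : Fin n → ℝ :=
  fun i => fderiv ℝ H y (Pi.single i 1)

/-- The stages `k_i = f(y₀ + h ∑_{j<i} a_{ij} k_j)` of an explicit Runge--Kutta method. -/
noncomputable def rkStages {s n : ℕ} (A : Matrix (Fin s) (Fin s) ℝ)
    (f : (Fin n → ℝ) → (Fin n → ℝ)) (h : ℝ) (y₀ : Fin n → ℝ) :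
    Fin s → Fin n → ℝ
  | i => f (fun m => y₀ m + h * ∑ j : Fin s,
      if _ : (j : ℕ) < (i : ℕ) then A i j * rkStages A f h y₀ j m else 0)
  termination_by i => (i : ℕ)

/-- One step `y₁ = y₀ + h ∑_i b_i k_i` of an explicit Runge--Kutta method with
coefficients `(A, b)`, applied with step size `h` to `ẏ = f(y)` from `y₀`. -/
noncomputable def rkStep {s n : ℕ} (A : Matrix (Fin s) (Fin s) ℝ) (b : Fin s → ℝ)
    (f : (Fin n → ℝ) → (Fin n → ℝ)) (h : ℝ) (y₀ : Fin n → ℝ) : Fin n → ℝ :=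
  fun m => y₀ m + h * ∑ i, b i * rkStages A f h y₀ i m

open scoped ContDiff

local notation "D" => fderiv ℝ

section Asymptotics

variable {F : Type*} [NormedAddCommGroup F] [NormedSpace ℝ F]

theorem isBigO_pow_succ_of_deriv {u : ℝ → F} (hu : Differentiable ℝ u) (h0 : u 0 = 0) {k : ℕ}
    (hO : deriv u =O[𝓝 0] fun t => t ^ k) : u =O[𝓝 0] fun t => t ^ (k + 1) := by
  obtain ⟨C, hC⟩ := hO.bound
  obtain ⟨ε, hε, hball⟩ := Metric.eventually_nhds_iff_ball.1 hC
  refine IsBigO.of_bound |C| (Metric.eventually_nhds_iff_ball.2 ⟨ε, hε, fun t ht => ?_⟩)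
  rw [Metric.mem_ball, Real.dist_0_eq_abs] at ht
  have bound : ∀ s ∈ Set.uIcc 0 t, ‖deriv u s‖ ≤ |C| * ‖t‖ ^ k := fun s hs => by
    have hst : |s| ≤ |t| := by simpa using Set.abs_sub_left_of_mem_uIcc hs
    have hs : s ∈ Metric.ball 0 ε := by
      rw [Metric.mem_ball, Real.dist_0_eq_abs]; exact hst.trans_lt ht
    calc ‖deriv u s‖ ≤ C * ‖s ^ k‖ := hball s hs
      _ ≤ |C| * ‖t‖ ^ k := by
        rw [norm_pow, Real.norm_eq_abs, Real.norm_eq_abs]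
        exact mul_le_mul (le_abs_self C) (pow_le_pow_left₀ (abs_nonneg s) hst k) (by positivity)
          (abs_nonneg C)
  have := (convex_uIcc (0 : ℝ) t).norm_image_sub_le_of_norm_deriv_le (fun s _ => hu s) bound
    Set.left_mem_uIcc Set.right_mem_uIcc
  rw [h0, sub_zero, sub_zero] at this
  rwa [norm_pow, pow_succ, ← mul_assoc]

theorem sub_isBigO_pow_succ_of_iteratedDeriv_eq_zero {g : ℝ → F} (hg : ContDiff ℝ ∞ g) {k : ℕ}
    (hk : ∀ i ∈ Finset.Icc 1 k, iteratedDeriv i g 0 = 0) :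
    (fun t => g t - g 0) =O[𝓝 0] fun t => t ^ (k + 1) := by
  induction k generalizing g with
  | zero => simpa using (hg.differentiable (by simp) 0).isBigO_sub
  | succ k ih =>
    have hg' : ContDiff ℝ ∞ (deriv g) := (contDiff_infty_iff_deriv.1 hg).2
    have hderiv : (fun t => deriv g t - deriv g 0) =O[𝓝 0] fun t => t ^ (k + 1) :=
      ih hg' fun i hi => by
        rw [← iteratedDeriv_succ']
        exact hk (i + 1) (by simp only [Finset.mem_Icc] at hi ⊢; omega)
    have h1 : deriv g 0 = 0 := by simpa using hk 1 (by simp)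
    refine isBigO_pow_succ_of_deriv ((hg.differentiable (by simp)).sub_const _) (sub_self _) ?_
    simpa [h1] using hderiv

end Asymptotics

section ChainRule

variable {E F : Type*} [NormedAddCommGroup E] [NormedSpace ℝ E] [NormedAddCommGroup F]
  [NormedSpace ℝ F]

theorem hasDerivAt_smul_self {w : ℝ → E} {w' : E} {t : ℝ} (hw : HasDerivAt w w' t) :
    HasDerivAt (fun s => s • w s) (w t + t • w') t :=
  ((hasDerivAt_id' t).smul hw).congr_deriv (by simp [add_comm])

theorem hasDerivAt_comp_add_smul {f : E → F} {x u : E} {t : ℝ}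
    (hf : DifferentiableAt ℝ f (x + t • u)) :
    HasDerivAt (fun s => f (x + s • u)) (D f (x + t • u) u) t :=
  (hf.hasFDerivAt.comp_hasDerivAt t
    (((hasDerivAt_id' t).smul_const u).const_add x)).congr_deriv (by simp)

theorem hasDerivAt_comp_apply {f : E → E →L[ℝ] F} {γ v : ℝ → E} {γ' v' : E} {t : ℝ}
    (hf : DifferentiableAt ℝ f (γ t)) (hγ : HasDerivAt γ γ' t) (hv : HasDerivAt v v' t) :
    HasDerivAt (fun s => f (γ s) (v s)) (D f (γ t) γ' (v t) + f (γ t) v') t :=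
  (hf.hasFDerivAt.comp_hasDerivAt t hγ).clm_apply hv

variable {H : E → F} (hH : ContDiff ℝ ∞ H) {γ γ₁ γ₂ : ℝ → E}
  (hγ : ∀ t, HasDerivAt γ (γ₁ t) t) (hγ₁ : ∀ t, HasDerivAt γ₁ (γ₂ t) t)
include hH hγ

theorem iteratedDeriv_one_comp (t : ℝ) :
    iteratedDeriv 1 (fun s => H (γ s)) t = D H (γ t) (γ₁ t) := by
  rw [iteratedDeriv_one]
  exact ((hH.differentiable (by simp) _).hasFDerivAt.comp_hasDerivAt t (hγ t)).deriv

include hγ₁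

theorem iteratedDeriv_two_comp (t : ℝ) :
    iteratedDeriv 2 (fun s => H (γ s)) t = D (D H) (γ t) (γ₁ t) (γ₁ t) + D H (γ t) (γ₂ t) := by
  rw [iteratedDeriv_succ, funext (iteratedDeriv_one_comp hH hγ)]
  exact (hasDerivAt_comp_apply ((hH.fderiv_right (m := ∞) (by simp)).differentiable (by simp) _)
    (hγ t) (hγ₁ t)).deriv

theorem iteratedDeriv_three_comp {t : ℝ} {γ₃ : E} (hγ₂ : HasDerivAt γ₂ γ₃ t) :
    iteratedDeriv 3 (fun s => H (γ s)) t = D (D (D H)) (γ t) (γ₁ t) (γ₁ t) (γ₁ t)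
      + (3 : ℝ) • D (D H) (γ t) (γ₁ t) (γ₂ t) + D H (γ t) γ₃ := by
  have hDH : ContDiff ℝ ∞ (D H) := hH.fderiv_right (by simp)
  have hDDH : ContDiff ℝ ∞ (D (D H)) := hDH.fderiv_right (by simp)
  rw [iteratedDeriv_succ, funext (iteratedDeriv_two_comp hH hγ hγ₁)]
  have h₁ := hasDerivAt_comp_apply (hDDH.differentiable (by simp) _) (hγ t) (hγ₁ t)
  have h₂ := hasDerivAt_comp_apply (hDH.differentiable (by simp) _) (hγ t) hγ₂
  refine ((h₁.clm_apply (hγ₁ t)).add h₂).deriv.trans ?_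
  rw [_root_.add_apply,
    (hH.contDiffAt.isSymmSndFDerivAt (by simpa using ENat.LEInfty.out)).eq (γ₂ t)]
  module

end ChainRule

section SmulCurve

variable {E F : Type*} [NormedAddCommGroup E] [NormedSpace ℝ E] [NormedAddCommGroup F]
  [NormedSpace ℝ F] {H : E → F} (hH : ContDiff ℝ ∞ H) (x : E) {w w₁ w₂ : ℝ → E}
  (hw : ∀ t, HasDerivAt w (w₁ t) t) (hw₁ : ∀ t, HasDerivAt w₁ (w₂ t) t)
include hH hw

theorem iteratedDeriv_one_comp_add_smul :
    iteratedDeriv 1 (fun t => H (x + t • w t)) 0 = D H x (w 0) := by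
  simpa using iteratedDeriv_one_comp hH (fun t => (hasDerivAt_smul_self (hw t)).const_add x) 0

include hw₁

theorem iteratedDeriv_two_comp_add_smul :
    iteratedDeriv 2 (fun t => H (x + t • w t)) 0 =
      D (D H) x (w 0) (w 0) + (2 : ℝ) • D H x (w₁ 0) := by
  rw [iteratedDeriv_two_comp hH (fun t => (hasDerivAt_smul_self (hw t)).const_add x)
    (fun t => (hw t).add (hasDerivAt_smul_self (hw₁ t))) 0]
  simp [two_smul]

theorem iteratedDeriv_three_comp_add_smul (hw₂ : DifferentiableAt ℝ w₂ 0) :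
    iteratedDeriv 3 (fun t => H (x + t • w t)) 0 =
      D (D (D H)) x (w 0) (w 0) (w 0) + (6 : ℝ) • D (D H) x (w 0) (w₁ 0)
        + (3 : ℝ) • D H x (w₂ 0) := by
  rw [iteratedDeriv_three_comp hH (fun t => (hasDerivAt_smul_self (hw t)).const_add x)
    (fun t => (hw t).add (hasDerivAt_smul_self (hw₁ t)))
    ((hw₁ 0).add ((hw₁ 0).add (hasDerivAt_smul_self hw₂.hasDerivAt)))]
  simp only [zero_smul, add_zero, map_add]
  module

end SmulCurve

noncomputable def ralstonStep {E : Type*} [AddCommGroup E] [Module ℝ E] (f : E → E) (h : ℝ)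
    (x : E) : E :=
  x + h • ((1/4 : ℝ) • f x + (3/4 : ℝ) • f (x + h • (2/3 : ℝ) • f x))

section Ralston

variable {E : Type*} [NormedAddCommGroup E] [NormedSpace ℝ E] {H : E → ℝ} (hH : ContDiff ℝ ∞ H)
  {Φ : (E →L[ℝ] ℝ) →L[ℝ] E} (hΦ : ∀ L M : E →L[ℝ] ℝ, L (Φ M) = -M (Φ L))
include hH hΦ

theorem energy_ralstonStep_sub_isBigO (x : E) :
    (fun h => H (ralstonStep (fun y => Φ (D H y)) h x) - H x) =O[𝓝 0] fun h => h ^ 4 := by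
  have hΦ_self (L : E →L[ℝ] ℝ) : L (Φ L) = 0 := by linarith [hΦ L L]
  have hDH : ContDiff ℝ ∞ (D H) := hH.fderiv_right (by simp)
  have hDDH : ContDiff ℝ ∞ (D (D H)) := hDH.fderiv_right (by simp)
  set v := Φ (D H x) with hv
  set u := (2/3 : ℝ) • v
  set w : ℝ → E := fun t => (1/4 : ℝ) • v + (3/4 : ℝ) • Φ (D H (x + t • u))
  set w₁ : ℝ → E := fun t => (3/4 : ℝ) • Φ (D (D H) (x + t • u) u)
  set w₂ : ℝ → E := fun t => (3/4 : ℝ) • Φ (D (D (D H)) (x + t • u) u u)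
  have hw (t : ℝ) : HasDerivAt w (w₁ t) t :=
    ((Φ.hasFDerivAt.comp_hasDerivAt t
      (hasDerivAt_comp_add_smul (hDH.differentiable (by simp) _))).const_smul _).const_add _
  have hw₁ (t : ℝ) : HasDerivAt w₁ (w₂ t) t := by
    refine ((Φ.hasFDerivAt.comp_hasDerivAt t
      ((hasDerivAt_comp_add_smul (hDDH.differentiable (by simp) _)).clm_apply
        (hasDerivAt_const t u))).const_smul (3/4 : ℝ)).congr_deriv ?_
    simp [w₂]
  have hw₂ : DifferentiableAt ℝ w₂ 0 := by
    have hw₁_smooth : ContDiff ℝ ∞ w₁ := by fun_prop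
    rw [← funext fun t => (hw₁ t).deriv]
    exact ((contDiff_infty_iff_deriv.1 hw₁_smooth).2.differentiable (by simp)) 0
  have hw0 : w 0 = v := by simp only [w, zero_smul, add_zero, ← hv]; module
  have hg : ContDiff ℝ ∞ fun t => H (x + t • w t) := by fun_prop
  have hO := sub_isBigO_pow_succ_of_iteratedDeriv_eq_zero hg (k := 3) fun i hi => by
    obtain ⟨hi₁, hi₃⟩ := Finset.mem_Icc.1 hi
    interval_cases i
    · rw [iteratedDeriv_one_comp_add_smul hH x hw, hw0]
      exact hΦ_self _
    · rw [iteratedDeriv_two_comp_add_smul hH x hw hw₁, hw0]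
      simp only [w₁, u, zero_smul, add_zero, map_smul, smul_eq_mul, hΦ (D H x), ← hv]
      ring
    · rw [iteratedDeriv_three_comp_add_smul hH x hw hw₁ hw₂, hw0]
      simp only [w₁, w₂, u, zero_smul, add_zero, map_smul, smul_eq_mul, hΦ (D H x), ← hv,
        _root_.smul_apply, hΦ_self]
      ring
  simp only [zero_smul, add_zero] at hO
  exact hO

end Ralston

section HamiltonianMatrix

variable {n : ℕ}

noncomputable def hamiltonianMap (J : Matrix (Fin n) (Fin n) ℝ) :
    ((Fin n → ℝ) →L[ℝ] ℝ) →L[ℝ] (Fin n → ℝ) :=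
  (Matrix.toLin' J).toContinuousLinearMap.comp
    (ContinuousLinearMap.pi fun i => ContinuousLinearMap.apply ℝ ℝ (Pi.single i 1))

theorem hamiltonianMap_fderiv (J : Matrix (Fin n) (Fin n) ℝ) (H : (Fin n → ℝ) → ℝ)
    (y : Fin n → ℝ) : hamiltonianMap J (fderiv ℝ H y) = J *ᵥ grad H y := rfl

theorem hamiltonianMap_apply (J : Matrix (Fin n) (Fin n) ℝ) (L : (Fin n → ℝ) →L[ℝ] ℝ) :
    hamiltonianMap J L = J *ᵥ fun i => L (Pi.single i 1) := rfl

theorem apply_eq_dotProduct (L : (Fin n → ℝ) →L[ℝ] ℝ) (x : Fin n → ℝ) :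
    L x = (fun i => L (Pi.single i 1)) ⬝ᵥ x := by
  conv_lhs => rw [pi_eq_sum_univ' x]
  simp [dotProduct, mul_comm]

theorem apply_hamiltonianMap {J : Matrix (Fin n) (Fin n) ℝ} (hJ : Jᵀ = -J)
    (L M : (Fin n → ℝ) →L[ℝ] ℝ) : L (hamiltonianMap J M) = -M (hamiltonianMap J L) := by
  rw [hamiltonianMap_apply, hamiltonianMap_apply, apply_eq_dotProduct L, apply_eq_dotProduct M,
    dotProduct_mulVec, ← mulVec_transpose, hJ, neg_mulVec, neg_dotProduct, dotProduct_comm]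

end HamiltonianMatrix

theorem rkStep_eq_ralstonStep {n : ℕ} (f : (Fin n → ℝ) → (Fin n → ℝ)) (h : ℝ) (y₀ : Fin n → ℝ) :
    rkStep !![0, 0; 2/3, 0] ![1/4, 3/4] f h y₀ = ralstonStep f h y₀ := by
  have k₀ : rkStages !![0, 0; 2/3, 0] f h y₀ 0 = f y₀ := by
    rw [rkStages]; simp
  have k₁ : rkStages !![0, 0; 2/3, 0] f h y₀ 1 = f (y₀ + h • (2/3 : ℝ) • f y₀) := by
    rw [rkStages]; congr 1; ext m; simp [k₀]
  ext m
  simp [rkStep, ralstonStep, k₀, k₁, mul_add]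

/-- The two-stage explicit Runge--Kutta method with `a₂₁ = 2/3`, `c = (0, 2/3)`,
`b = (1/4, 3/4)` has pseudo-energy-preserving order at least 3 (energy error `O(h⁴)`
for every Hamiltonian system), while it fails the classical third-order condition
`∑ bᵢaᵢⱼcⱼ = 1/6` (indeed this sum is `0`), so its classical order is exactly 2. -/
theorem pep223_method (A : Matrix (Fin 2) (Fin 2) ℝ) (b c : Fin 2 → ℝ)
    (hA : A = !![0, 0; 2/3, 0]) (hb : b = ![1/4, 3/4]) (hc : c = ![0, 2/3]) :
    (∀ (n : ℕ) (J : Matrix (Fin n) (Fin n) ℝ), Jᵀ = -J →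
      ∀ (H : (Fin n → ℝ) → ℝ), ContDiff ℝ (⊤ : ℕ∞) H →
        ∀ y₀ : Fin n → ℝ,
          (fun h => H (rkStep A b (fun y => J.mulVec (grad H y)) h y₀) - H y₀)
            =O[𝓝 (0 : ℝ)] (fun h => h ^ 4)) ∧
    (∑ i, ∑ j, b i * A i j * c j = 0) ∧
    (∑ i, ∑ j, b i * A i j * c j ≠ 1 / 6) := by
  subst hA hb hc
  refine ⟨fun n J hJ H hH y₀ => ?_, by norm_num [Fin.sum_univ_two], by norm_num [Fin.sum_univ_two]⟩
  simp only [rkStep_eq_ralstonStep, ← hamiltonianMap_fderiv]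
  exact energy_ralstonStep_sub_isBigO hH (apply_hamiltonianMap hJ) y₀
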